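/- arXiv:2405.00803 — 2 statements merged into one kernel-verified Lean document; each statement's English description precedes it below -/
import Mathlib

section
/- For real t with |sin(t/2)| ≥ c with 0 < c ≤ 1 and n ≥ 1, the absolute value of ∑_{j=-n}^n j^2 e^{ijt} is at most C(n^2/c + 1/c^3) for an absolute constant C. -/
open Finset Complex

theorem dirichlet_kernel_second_deriv_bound :
    ∃ C : ℝ, 0 < C ∧ ∀ (t : ℝ) (n : ℕ) (c : ℝ), 0 < c → c ≤ 1 →
      c ≤ |Real.sin (t / 2)| → 1 ≤ n →
      ‖∑ j ∈ Finset.Icc (-(n : ℤ)) (n : ℤ),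
          (j : ℂ) ^ 2 * Complex.exp (Complex.I * (j : ℂ) * (t : ℂ))‖ ≤
        C * ((n : ℝ) ^ 2 / c + 1 / c ^ 3) := by
  refine ⟨7, by norm_num, fun t n c hc hc1 hsin hn => ?_⟩
  set z : ℂ := Complex.exp (Complex.I * t) with hz
  have hz0 : z ≠ 0 := Complex.exp_ne_zero _
  have hzabs : ‖z‖ = 1 := by
    rw [hz, mul_comm]; exact Complex.norm_exp_ofReal_mul_I t
  -- |z - 1| = 2 |sin(t/2)|
  have hz1 : ‖z - 1‖ = 2 * |Real.sin (t/2)| := by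
    set A : ℂ := Complex.exp (((t:ℂ)/2) * Complex.I) with hA
    set B : ℂ := Complex.exp ((-((t:ℂ)/2)) * Complex.I) with hB
    have hAB : A * B = 1 := by
      rw [hA, hB, ← Complex.exp_add, ← Complex.exp_zero]; ring_nf
    have hE : z = A * A := by rw [hz, hA, ← Complex.exp_add]; ring_nf
    have hSin : Complex.sin ((t:ℂ)/2) = (B - A) * Complex.I / 2 := by
      rw [Complex.sin, hA, hB]
    have hkey : z - 1 = A * (2 * Complex.I * Complex.sin ((t:ℂ)/2)) := by
      rw [hE, hSin]
      linear_combination hAB - A * (B - A) * Complex.I_sq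
    rw [hkey, norm_mul]
    have h2 : ((t : ℂ)/2) = ((t/2 : ℝ) : ℂ) := by push_cast; ring
    rw [hA, h2, Complex.norm_exp_ofReal_mul_I, one_mul, ← Complex.ofReal_sin]
    rw [norm_mul, norm_mul, Complex.norm_two, Complex.norm_I, Complex.norm_real, Real.norm_eq_abs, mul_one]
  have hz1ge : 2 * c ≤ ‖z - 1‖ := by rw [hz1]; linarith
  have hzne : z ≠ 1 := by
    intro h; rw [h, sub_self, norm_zero] at hz1ge; linarith
  -- geometric partial sums bound
  have hG : ∀ m : ℕ, ‖∑ k ∈ Finset.range m, z ^ k‖ ≤ 1 / c := by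
    intro m
    rw [geom_sum_eq hzne, norm_div]
    have hnum : ‖z ^ m - 1‖ ≤ 2 := by
      calc ‖z ^ m - 1‖ ≤ ‖z ^ m‖ + ‖(1:ℂ)‖ :=
            norm_sub_le _ _
        _ = 2 := by rw [norm_pow, hzabs, norm_one]; norm_num
    calc ‖z ^ m - 1‖ / ‖z - 1‖
        ≤ 2 / (2 * c) := by
          apply div_le_div₀ (by norm_num) hnum (by linarith) hz1ge
      _ = 1 / c := by field_simp
  -- reindex to range (2n+1)
  have hmap : (Finset.Icc (-(n:ℤ)) (n:ℤ)) =
      (Finset.range (2*n+1)).map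
        (⟨fun k : ℕ => (k:ℤ) - n, @id (Function.Injective (fun k : ℕ => (k:ℤ) - n)) (fun a b h => by simpa using h)⟩ : ℕ ↪ ℤ) := by
    ext j
    simp only [Finset.mem_Icc, Finset.mem_map, Finset.mem_range, Function.Embedding.coeFn_mk]
    constructor
    · intro ⟨h1, h2⟩; exact ⟨(j + n).toNat, by omega, by omega⟩
    · rintro ⟨k, hk, rfl⟩; omega
  rw [hmap, Finset.sum_map]
  simp only [Function.Embedding.coeFn_mk]
  have hterm : ∀ k ∈ Finset.range (2*n+1),
      ((((k:ℤ) - n : ℤ)) : ℂ) ^ 2 * Complex.exp (Complex.I * ((((k:ℤ) - n : ℤ)) : ℂ) * t)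
        = z ^ (-(n:ℤ)) * (((k:ℂ) - n) ^ 2 * z ^ k) := by
    intro k _
    have he : Complex.exp (Complex.I * ((((k:ℤ) - n : ℤ)) : ℂ) * t) = z ^ ((k:ℤ) - n) := by
      rw [← Complex.exp_int_mul]
      congr 1
      push_cast
      ring
    rw [he, sub_eq_neg_add, zpow_add₀ hz0, zpow_natCast]
    push_cast
    ring
  rw [Finset.sum_congr rfl hterm, ← Finset.mul_sum, norm_mul, norm_zpow, hzabs, one_zpow, one_mul]
  -- Abel summation
  have habel := Finset.sum_range_by_parts (fun k => ((k:ℂ) - n) ^ 2) (fun k => z ^ k) (2*n+1)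
  simp only [smul_eq_mul] at habel
  rw [habel]
  have hn' : (1:ℝ) ≤ n := by exact_mod_cast hn
  have h1 : ‖(((2*n+1-1 : ℕ):ℂ) - n) ^ 2 * ∑ i ∈ Finset.range (2*n+1), z ^ i‖
      ≤ (n:ℝ)^2 * (1/c) := by
    rw [norm_mul]
    apply mul_le_mul _ (hG _) (norm_nonneg _) (by positivity)
    have he : (((2*n+1-1 : ℕ):ℂ) - n) = ((n:ℝ) : ℂ) := by
      have h : (2*n+1-1 : ℕ) = 2*n := by omega
      rw [h]; push_cast; ring
    rw [he, norm_pow, Complex.norm_real, Real.norm_eq_abs, _root_.abs_of_nonneg (by positivity : (0:ℝ) ≤ (n:ℝ))]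
  have h2 : ‖∑ i ∈ Finset.range (2*n+1-1),
        ((((i+1:ℕ):ℂ) - n) ^ 2 - (((i:ℕ):ℂ) - n) ^ 2) * ∑ k ∈ Finset.range (i+1), z ^ k‖
      ≤ (2*(n:ℝ)) * ((2*(n:ℝ)+1) * (1/c)) := by
    calc ‖∑ i ∈ Finset.range (2*n+1-1),
          ((((i+1:ℕ):ℂ) - n) ^ 2 - (((i:ℕ):ℂ) - n) ^ 2) * ∑ k ∈ Finset.range (i+1), z ^ k‖
        ≤ ∑ i ∈ Finset.range (2*n+1-1), ‖
          ((((i+1:ℕ):ℂ) - n) ^ 2 - (((i:ℕ):ℂ) - n) ^ 2) * ∑ k ∈ Finset.range (i+1), z ^ k‖ :=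
          norm_sum_le _ _
      _ ≤ ∑ _i ∈ Finset.range (2*n+1-1), (2*(n:ℝ)+1) * (1/c) := by
          apply Finset.sum_le_sum
          intro i hi
          rw [norm_mul]
          apply mul_le_mul _ (hG _) (norm_nonneg _) (by positivity)
          have hd : ((((i+1:ℕ):ℂ) - n) ^ 2 - (((i:ℕ):ℂ) - n) ^ 2)
              = ((2*(i:ℝ) - 2*n + 1 : ℝ) : ℂ) := by push_cast; ring
          rw [hd, Complex.norm_real, Real.norm_eq_abs]
          rw [Finset.mem_range] at hi
          have hi' : (i:ℝ) ≤ 2*n := by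
            have : i ≤ 2*n := by omega
            exact_mod_cast this
          have hi0 : (0:ℝ) ≤ i := Nat.cast_nonneg i
          rw [abs_le]
          constructor <;> linarith
      _ = ((2*n+1-1 : ℕ) : ℝ) * ((2*(n:ℝ)+1) * (1/c)) := by
          rw [Finset.sum_const, Finset.card_range, nsmul_eq_mul]
      _ = (2*(n:ℝ)) * ((2*(n:ℝ)+1) * (1/c)) := by
          have h : (2*n+1-1 : ℕ) = 2*n := by omega
          rw [h]; push_cast; ring
  calc ‖(((2*n+1-1 : ℕ):ℂ) - n) ^ 2 * (∑ i ∈ Finset.range (2*n+1), z ^ i)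
          - ∑ i ∈ Finset.range (2*n+1-1),
            ((((i+1:ℕ):ℂ) - n) ^ 2 - (((i:ℕ):ℂ) - n) ^ 2) * ∑ k ∈ Finset.range (i+1), z ^ k‖
      ≤ (n:ℝ)^2 * (1/c) + (2*(n:ℝ)) * ((2*(n:ℝ)+1) * (1/c)) := by
        refine le_trans (norm_sub_le _ _) (add_le_add h1 h2)
    _ ≤ 7 * ((n:ℝ)^2 / c + 1 / c^3) := by
        have hcp : (0:ℝ) < 1/c := by positivity
        have h3 : 2*(n:ℝ)+1 ≤ 3*n := by linarith
        have h4 : (2*(n:ℝ)) * ((2*(n:ℝ)+1) * (1/c)) ≤ 6 * (n:ℝ)^2 * (1/c) := by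
          have := mul_le_mul_of_nonneg_left (mul_le_mul_of_nonneg_right h3 hcp.le)
            (by positivity : (0:ℝ) ≤ 2*(n:ℝ))
          nlinarith
        have h5 : (0:ℝ) ≤ 1 / c^3 := by positivity
        have : (n:ℝ)^2 * (1/c) = (n:ℝ)^2 / c := by ring
        nlinarith [sq_nonneg (n:ℝ)]
end

section
/- Let x_1,…,x_r be real with |sin((x_k - x_{k'})/2)| ≥ c > 0 for all k ≠ k', and B_{jk} = e^{ijx_k} for -n ≤ j ≤ n. If 2n+1 > (r-1)/c, then B has rank r (i.e., B*B is positive definite). -/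
open Matrix
open scoped ComplexOrder

lemma abs_cexp_mul_I_sub_one (θ : ℝ) :
    ‖Complex.exp (Complex.I * θ) - 1‖ = 2 * |Real.sin (θ / 2)| := by
  have e1 : Complex.exp (Complex.I * ((θ/2 : ℝ) : ℂ)) * Complex.exp (((θ/2 : ℝ) : ℂ) * Complex.I)
      = Complex.exp (Complex.I * θ) := by
    rw [← Complex.exp_add]; push_cast; ring_nf
  have e2 : Complex.exp (Complex.I * ((θ/2 : ℝ) : ℂ)) * Complex.exp (-((θ/2 : ℝ) : ℂ) * Complex.I)
      = 1 := by
    rw [← Complex.exp_add,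
      show Complex.I * ((θ/2 : ℝ) : ℂ) + -((θ/2 : ℝ) : ℂ) * Complex.I = 0 by ring,
      Complex.exp_zero]
  have h : Complex.exp (Complex.I * θ) - 1
      = Complex.exp (Complex.I * ((θ/2 : ℝ) : ℂ)) *
        (2 * Complex.I * Complex.sin ((θ/2 : ℝ) : ℂ)) := by
    rw [Complex.sin]
    linear_combination e2 - e1 - (Complex.exp (Complex.I * ((θ/2 : ℝ) : ℂ)) *
      (Complex.exp (-((θ/2 : ℝ) : ℂ) * Complex.I) -
        Complex.exp (((θ/2 : ℝ) : ℂ) * Complex.I))) * Complex.I_sq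
  rw [h, norm_mul, ← Complex.ofReal_sin, norm_mul, norm_mul, Complex.norm_real, Complex.norm_I,
    Complex.norm_exp]
  norm_num

lemma row_sum_bound (n : ℕ) (θ : ℝ) (c : ℝ) (hc : 0 < c) (hs : c ≤ |Real.sin (θ/2)|) :
    ‖∑ j : Fin (2*n+1), Complex.exp (Complex.I * (((j : ℕ) : ℂ) - (n : ℂ)) * θ)‖
      ≤ 1 / c := by
  set z : ℂ := Complex.exp (Complex.I * θ) with hz
  have habs1 : ‖z‖ = 1 := by
    rw [hz, Complex.norm_exp]; simp
  have hterm : ∀ j : Fin (2*n+1),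
      Complex.exp (Complex.I * (((j : ℕ) : ℂ) - (n : ℂ)) * θ)
        = z ^ (j : ℕ) * Complex.exp (-(Complex.I * (n : ℂ) * θ)) := by
    intro j
    rw [hz, ← Complex.exp_nat_mul, ← Complex.exp_add]
    ring_nf
  have hsum : (∑ j : Fin (2*n+1), Complex.exp (Complex.I * (((j : ℕ) : ℂ) - (n : ℂ)) * θ))
      = (∑ j ∈ Finset.range (2*n+1), z ^ j) * Complex.exp (-(Complex.I * (n : ℂ) * θ)) := by
    rw [Finset.sum_mul, ← Fin.sum_univ_eq_sum_range (fun j => z ^ j * _)]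
    exact Finset.sum_congr rfl fun j _ => hterm j
  have hz1 : ‖z - 1‖ = 2 * |Real.sin (θ/2)| := abs_cexp_mul_I_sub_one θ
  have hzne : z ≠ 1 := by
    intro h
    rw [h, sub_self, norm_zero] at hz1
    have h2 : 0 < |Real.sin (θ/2)| := lt_of_lt_of_le hc hs
    linarith
  rw [hsum, norm_mul, geom_sum_eq hzne, norm_div]
  have habsexp : ‖Complex.exp (-(Complex.I * (n : ℂ) * θ))‖ = 1 := by
    rw [Complex.norm_exp]; simp
  rw [habsexp, mul_one]
  have hnum : ‖z ^ (2*n+1) - 1‖ ≤ 2 := by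
    calc ‖z ^ (2*n+1) - 1‖ ≤ ‖z ^ (2*n+1)‖ + ‖(1:ℂ)‖ := by
          exact norm_sub_le _ _
      _ = 2 := by rw [norm_pow, habs1, one_pow, norm_one]; norm_num
  have hden : 2 * c ≤ ‖z - 1‖ := by
    rw [hz1]; nlinarith
  have hdpos : 0 < ‖z - 1‖ := lt_of_lt_of_le (by positivity) hden
  rw [div_le_div_iff₀ hdpos hc]
  calc ‖z ^ (2*n+1) - 1‖ * c ≤ 2 * c := by nlinarith [norm_nonneg (z ^ (2*n+1) - 1)]
    _ ≤ 1 * ‖z - 1‖ := by linarith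

theorem B_full_rank (n r : ℕ) (x : Fin r → ℝ) (c : ℝ) (hc : 0 < c)
    (hgap : ∀ k k' : Fin r, k ≠ k' → c ≤ |Real.sin ((x k - x k') / 2)|)
    (B : Matrix (Fin (2 * n + 1)) (Fin r) ℂ)
    (hB : ∀ j k, B j k = Complex.exp (Complex.I * (((j : ℕ) : ℂ) - (n : ℂ)) * (x k : ℂ)))
    (hn : ((r : ℝ) - 1) / c < 2 * n + 1) :
    B.rank = r ∧ (Bᴴ * B).PosDef := by
  set M : Matrix (Fin r) (Fin r) ℂ := Bᴴ * B with hM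
  -- entry formula
  have hentry : ∀ k k' : Fin r, M k k'
      = ∑ j : Fin (2*n+1), Complex.exp (Complex.I * (((j : ℕ) : ℂ) - (n : ℂ))
        * ((x k' - x k : ℝ) : ℂ)) := by
    intro k k'
    rw [hM, Matrix.mul_apply]
    refine Finset.sum_congr rfl fun j _ => ?_
    rw [Matrix.conjTranspose_apply, hB, hB]
    rw [Complex.star_def, ← Complex.exp_conj, ← Complex.exp_add]
    congr 1
    simp only [_root_.map_mul, map_sub, Complex.conj_I, Complex.conj_ofReal, map_natCast]
    push_cast
    ring
  have hdiag : ∀ k : Fin r, M k k = ((2*n+1 : ℕ) : ℂ) := by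
    intro k
    rw [hentry k k]
    simp
  have hoff : ∀ k k' : Fin r, k ≠ k' → ‖M k k'‖ ≤ 1 / c := by
    intro k k' hkk
    rw [hentry k k']
    refine row_sum_bound n (x k' - x k) c hc ?_
    exact hgap k' k (Ne.symm hkk)
  -- injectivity
  have key : ∀ v : Fin r → ℂ, B *ᵥ v = 0 → v = 0 := by
    intro v hv
    by_contra hv0
    obtain ⟨k1, hk1⟩ := Function.ne_iff.mp hv0
    have hk1' : v k1 ≠ 0 := by simpa using hk1
    obtain ⟨k₀, -, hmax⟩ := Finset.exists_max_image Finset.univ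
      (fun k => ‖v k‖) ⟨k1, Finset.mem_univ _⟩
    have hpos : 0 < ‖v k₀‖ :=
      lt_of_lt_of_le (norm_pos_iff.mpr hk1')
        (hmax k1 (Finset.mem_univ _))
    have hMv : M *ᵥ v = 0 := by
      rw [hM, ← mulVec_mulVec, hv, mulVec_zero]
    have h0 : ∑ k', M k₀ k' * v k' = 0 := by
      have := congrFun hMv k₀
      simpa [Matrix.mulVec, dotProduct] using this
    have hsplit : M k₀ k₀ * v k₀ = -∑ k' ∈ Finset.univ.erase k₀, M k₀ k' * v k' := by
      have := Finset.add_sum_erase Finset.univ (fun k' => M k₀ k' * v k') (Finset.mem_univ k₀)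
      rw [h0] at this
      linear_combination this
    have hlhs : ‖M k₀ k₀ * v k₀‖ = (2*n+1 : ℝ) * ‖v k₀‖ := by
      rw [norm_mul, hdiag]
      rw [Complex.norm_natCast]
      push_cast
      ring
    have hrhs : ‖∑ k' ∈ Finset.univ.erase k₀, M k₀ k' * v k'‖
        ≤ ((r : ℝ) - 1) / c * ‖v k₀‖ := by
      calc ‖∑ k' ∈ Finset.univ.erase k₀, M k₀ k' * v k'‖
          ≤ ∑ k' ∈ Finset.univ.erase k₀, ‖M k₀ k' * v k'‖ :=
            norm_sum_le _ _
        _ ≤ ∑ _k' ∈ Finset.univ.erase k₀, (1/c) * ‖v k₀‖ := by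
            refine Finset.sum_le_sum fun k' hk' => ?_
            rw [norm_mul]
            have h1 := hoff k₀ k' (Ne.symm (Finset.ne_of_mem_erase hk'))
            have h2 := hmax k' (Finset.mem_univ _)
            have := norm_nonneg (v k')
            have h1c : (0:ℝ) ≤ 1/c := by positivity
            nlinarith [norm_nonneg (M k₀ k')]
        _ = ((r : ℝ) - 1) / c * ‖v k₀‖ := by
            rw [Finset.sum_const, Finset.card_erase_of_mem (Finset.mem_univ _)]
            simp only [Finset.card_univ, Fintype.card_fin, nsmul_eq_mul]
            have hr1 : 1 ≤ r := Fin.pos k₀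
            rw [Nat.cast_sub hr1]
            push_cast
            ring
    have : (2*n+1 : ℝ) * ‖v k₀‖ ≤ ((r : ℝ) - 1) / c * ‖v k₀‖ := by
      rw [← hlhs, hsplit, norm_neg]
      exact hrhs
    nlinarith
  -- positive definiteness
  have hpd : M.PosDef := by
    refine Matrix.posDef_iff_dotProduct_mulVec.mpr ⟨Matrix.isHermitian_conjTranspose_mul_self B, fun v hv => ?_⟩
    have heq : star v ⬝ᵥ (M *ᵥ v) = star (B *ᵥ v) ⬝ᵥ (B *ᵥ v) := by
      rw [hM, ← mulVec_mulVec, dotProduct_mulVec, ← star_mulVec]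
    rw [heq]
    exact Matrix.dotProduct_star_self_pos_iff.mpr fun h => hv (key v h)
  refine ⟨?_, hpd⟩
  have h1 : M.rank = r := by
    rw [Matrix.rank_of_isUnit _ hpd.isUnit, Fintype.card_fin]
  rw [← Matrix.rank_conjTranspose_mul_self, ← hM, h1]
end
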